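/- Let (P_n) be strongly invariant for the system (A) and let h, k be growth rates. If there exist a sequence of norms 𝒩 = {|||·|||_n : n ∈ ℕ} compatible with (P_n) and a nondecreasing sequence d : ℕ → [1,∞) such that Σ_{j=n}^{m} h_j|||A_j^n P_n x|||_j ≤ d_n h_n|||x|||_n and Σ_{j=n}^{m} k_j|||B_j^n Q_j x|||_n ≤ d_m k_n|||x|||_m for all m ≥ n and all x ∈ X, then the pair (A,P) is (h,k)-dichotomic. -/

import Mathlib

open ContinuousLinearMap Filter

noncomputable section

variable {X : Type*} [NormedAddCommGroup X] [NormedSpace ℝ X]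

/-- The evolution operator `A_m^n` associated to the linear difference system
`x_{n+1} = A_n x_n`: `A_m^n = A_{m-1} ⋯ A_n` for `m > n` and `A_n^n = I`. -/
def evol (A : ℕ → X →L[ℝ] X) : ℕ → ℕ → X →L[ℝ] X
  | 0, _ => 1
  | m + 1, n => if m + 1 ≤ n then 1 else A m ∘L evol A m n

/-- `P` is a projectors sequence. -/
def ProjSeq (P : ℕ → X →L[ℝ] X) : Prop := ∀ n, P n ∘L P n = P n

/-- The projectors sequence `P` is invariant for the system `(A)`. -/
def InvariantFor (A P : ℕ → X →L[ℝ] X) : Prop := ∀ n, A n ∘L P n = P (n + 1) ∘L A n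

/-- The projectors sequence `P` is strongly invariant for the system `(A)`: it is invariant and
the restriction of `A_m^n` to `Ker P_n` is an isomorphism from `Ker P_n` onto `Ker P_m`. -/
def StronglyInvariantFor (A P : ℕ → X →L[ℝ] X) : Prop :=
  InvariantFor A P ∧ ∀ m n : ℕ, n ≤ m →
    Set.BijOn (evol A m n) (LinearMap.ker (P n : X →ₗ[ℝ] X) : Set X) (LinearMap.ker (P m : X →ₗ[ℝ] X))

/-- A growth rate: an increasing sequence with values in `[1, ∞)` tending to `∞`. -/
def IsGrowthRate (h : ℕ → ℝ) : Prop :=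
  StrictMono h ∧ (∀ n, 1 ≤ h n) ∧ Tendsto h atTop atTop

/-- The pair `(A, P)` is `(h,k)`-dichotomic. -/
def Dichotomic (A P : ℕ → X →L[ℝ] X) (h k : ℕ → ℝ) : Prop :=
  ∃ d : ℕ → ℝ, (∀ n, 1 ≤ d n) ∧ Monotone d ∧
    ∀ m n : ℕ, n ≤ m → ∀ x : X,
      h m * ‖evol A m n (P n x)‖ ≤ d n * (h n * ‖P n x‖) ∧
      k m * ‖(1 - P n) x‖ ≤ d m * (k n * ‖evol A m n ((1 - P n) x)‖)

/-- The pair `(A, P)` is uniformly `(h,k)`-dichotomic. -/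
def UniformDichotomic (A P : ℕ → X →L[ℝ] X) (h k : ℕ → ℝ) : Prop :=
  ∃ d : ℝ, 1 ≤ d ∧
    ∀ m n : ℕ, n ≤ m → ∀ x : X,
      h m * ‖evol A m n (P n x)‖ ≤ d * (h n * ‖P n x‖) ∧
      k m * ‖(1 - P n) x‖ ≤ d * (k n * ‖evol A m n ((1 - P n) x)‖)

/-- The pair `(A, P)` has `(h,k)`-growth. -/
def HasGrowth (A P : ℕ → X →L[ℝ] X) (h k : ℕ → ℝ) : Prop :=
  ∃ g : ℕ → ℝ, (∀ n, 1 ≤ g n) ∧ Monotone g ∧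
    ∀ m n : ℕ, n ≤ m → ∀ x : X,
      h n * ‖evol A m n (P n x)‖ ≤ g n * (h m * ‖P n x‖) ∧
      k n * ‖(1 - P n) x‖ ≤ g m * (k m * ‖evol A m n ((1 - P n) x)‖)

/-- `N` is a sequence of norms on `X`. -/
def IsNormSeq (N : ℕ → X → ℝ) : Prop :=
  ∀ n, (∀ x y, N n (x + y) ≤ N n x + N n y) ∧
    (∀ (a : ℝ) (x : X), N n (a • x) = |a| * N n x) ∧
    (∀ x, N n x = 0 ↔ x = 0)

/-- The sequence of norms `N` is compatible with the projectors sequence `P`. -/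
def NormsCompatible (N : ℕ → X → ℝ) (P : ℕ → X →L[ℝ] X) : Prop :=
  IsNormSeq N ∧ ∃ c : ℕ → ℝ, (∀ n, 1 ≤ c n) ∧ Monotone c ∧
    ∀ (n : ℕ) (x : X), ‖x‖ ≤ N n x ∧ N n x ≤ c n * (‖P n x‖ + ‖(1 - P n) x‖)

/-- The defining properties of the skew-evolution operator `B` associated to the pair `(A, P)`:
`A_m^n B_m^n Q_m = Q_m`, `B_m^n A_m^n Q_n = Q_n` and `B_m^n Q_m = Q_n B_m^n Q_m` for `m ≥ n`,
where `Q_n = I - P_n`. -/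
def SkewEvol (A P : ℕ → X →L[ℝ] X) (B : ℕ → ℕ → X →L[ℝ] X) : Prop :=
  ∀ m n : ℕ, n ≤ m →
    evol A m n ∘L (B m n ∘L (1 - P m)) = 1 - P m ∧
    B m n ∘L (evol A m n ∘L (1 - P n)) = 1 - P n ∧
    B m n ∘L (1 - P m) = (1 - P n) ∘L (B m n ∘L (1 - P m))


/-! Each of the two weighted sums dominates its last term `j = m`. For `x ∈ Im P_n` this gives
`h_m |||A_m^n x|||_m ≤ d_n h_n |||x|||_n`; for `y = A_m^n Q_n x ∈ Ker P_m`, where `B_m^n Q_m y = Q_n x`,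
it gives `k_m |||Q_n x|||_n ≤ d_m k_n |||y|||_m`. On `Im P_n` and `Ker P_n` compatibility reads
`‖x‖ ≤ |||x|||_n ≤ c_n ‖x‖`, so both estimates pass to the norm of `X` with constant `c_n d_n`. -/

lemma evol_self (A : ℕ → X →L[ℝ] X) (n : ℕ) : evol A n n = 1 := by
  cases n <;> simp [evol]

lemma evol_succ (A : ℕ → X →L[ℝ] X) {m n : ℕ} (hnm : n ≤ m) :
    evol A (m + 1) n = A m ∘L evol A m n := by
  simp [evol, Nat.not_lt.mpr hnm]

lemma InvariantFor.evol_apply_proj {A P : ℕ → X →L[ℝ] X} (hI : InvariantFor A P) {m n : ℕ}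
    (hnm : n ≤ m) (x : X) : evol A m n (P n x) = P m (evol A m n x) := by
  induction m, hnm using Nat.le_induction with
  | base => simp [evol_self]
  | succ m hnm ih =>
    simp only [evol_succ A hnm, comp_apply, ih]
    exact congrArg (· (evol A m n x)) (hI m)

lemma IsGrowthRate.nonneg {h : ℕ → ℝ} (hh : IsGrowthRate h) (n : ℕ) : 0 ≤ h n :=
  zero_le_one.trans (hh.2.1 n)

lemma ProjSeq.apply_apply {P : ℕ → X →L[ℝ] X} (hP : ProjSeq P) (n : ℕ) (x : X) :
    P n (P n x) = P n x :=
  congrArg (· x) (hP n)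

lemma ProjSeq.apply_compl_apply {P : ℕ → X →L[ℝ] X} (hP : ProjSeq P) (n : ℕ) (x : X) :
    P n ((1 - P n) x) = 0 := by
  simp [hP.apply_apply]

lemma le_mul_norm_of_apply_eq_self {P : ℕ → X →L[ℝ] X} {N : ℕ → X → ℝ} {c : ℕ → ℝ} {n : ℕ}
    (hNc : ∀ x, N n x ≤ c n * (‖P n x‖ + ‖(1 - P n) x‖)) {x : X} (hx : P n x = x) :
    N n x ≤ c n * ‖x‖ := by
  simpa [hx] using hNc x

lemma le_mul_norm_of_apply_eq_zero {P : ℕ → X →L[ℝ] X} {N : ℕ → X → ℝ} {c : ℕ → ℝ} {n : ℕ}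
    (hNc : ∀ x, N n x ≤ c n * (‖P n x‖ + ‖(1 - P n) x‖)) {x : X} (hx : P n x = 0) :
    N n x ≤ c n * ‖x‖ := by
  simpa [hx] using hNc x

lemma stable_estimate {A P : ℕ → X →L[ℝ] X} {N : ℕ → X → ℝ} {h c d : ℕ → ℝ} {m n : ℕ}
    (hP : ProjSeq P) (hNc : ∀ n x, ‖x‖ ≤ N n x ∧ N n x ≤ c n * (‖P n x‖ + ‖(1 - P n) x‖))
    (hh : ∀ j, 0 ≤ h j) (hd : 0 ≤ d n) (hnm : n ≤ m)
    (hsum : ∀ x, ∑ j ∈ Finset.Icc n m, h j * N j (evol A j n (P n x)) ≤ d n * (h n * N n x))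
    (x : X) : h m * ‖evol A m n (P n x)‖ ≤ c n * d n * (h n * ‖P n x‖) := by
  have hN : ∀ j y, 0 ≤ N j y := fun j y => (norm_nonneg y).trans (hNc j y).1
  calc h m * ‖evol A m n (P n x)‖ ≤ h m * N m (evol A m n (P n x)) :=
        mul_le_mul_of_nonneg_left (hNc m _).1 (hh m)
    _ ≤ ∑ j ∈ Finset.Icc n m, h j * N j (evol A j n (P n x)) :=
        Finset.single_le_sum (f := fun j => h j * N j (evol A j n (P n x)))
          (fun j _ => mul_nonneg (hh j) (hN j _)) (Finset.right_mem_Icc.2 hnm)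
    _ ≤ d n * (h n * N n (P n x)) := by simpa only [hP.apply_apply] using hsum (P n x)
    _ ≤ d n * (h n * (c n * ‖P n x‖)) := by
        refine mul_le_mul_of_nonneg_left (mul_le_mul_of_nonneg_left ?_ (hh n)) hd
        exact le_mul_norm_of_apply_eq_self (fun y => (hNc n y).2) (hP.apply_apply n x)
    _ = c n * d n * (h n * ‖P n x‖) := by ring

lemma unstable_estimate {A P : ℕ → X →L[ℝ] X} {B : ℕ → ℕ → X →L[ℝ] X} {N : ℕ → X → ℝ}
    {k c d : ℕ → ℝ} {m n : ℕ} (hP : ProjSeq P) (hI : InvariantFor A P) (hB : SkewEvol A P B)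
    (hNc : ∀ n x, ‖x‖ ≤ N n x ∧ N n x ≤ c n * (‖P n x‖ + ‖(1 - P n) x‖))
    (hk : ∀ j, 0 ≤ k j) (hd : 0 ≤ d m) (hnm : n ≤ m)
    (hsum : ∀ y, ∑ j ∈ Finset.Icc n m, k j * N n (B j n ((1 - P j) y)) ≤ d m * (k n * N m y))
    (x : X) : k m * ‖(1 - P n) x‖ ≤ c m * d m * (k n * ‖evol A m n ((1 - P n) x)‖) := by
  have hN : ∀ j y, 0 ≤ N j y := fun j y => (norm_nonneg y).trans (hNc j y).1
  set y := evol A m n ((1 - P n) x)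
  have hPy : P m y = 0 := by rw [← hI.evol_apply_proj hnm, hP.apply_compl_apply, map_zero]
  have hQy : (1 - P m) y = y := by simp [hPy]
  have hBy : B m n y = (1 - P n) x := congrArg (· x) (hB m n hnm).2.1
  calc k m * ‖(1 - P n) x‖ ≤ k m * N n ((1 - P n) x) :=
        mul_le_mul_of_nonneg_left (hNc n _).1 (hk m)
    _ = k m * N n (B m n ((1 - P m) y)) := by rw [hQy, hBy]
    _ ≤ ∑ j ∈ Finset.Icc n m, k j * N n (B j n ((1 - P j) y)) :=
        Finset.single_le_sum (f := fun j => k j * N n (B j n ((1 - P j) y)))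
          (fun j _ => mul_nonneg (hk j) (hN n _)) (Finset.right_mem_Icc.2 hnm)
    _ ≤ d m * (k n * N m y) := hsum y
    _ ≤ d m * (k n * (c m * ‖y‖)) := by
        refine mul_le_mul_of_nonneg_left (mul_le_mul_of_nonneg_left ?_ (hk n)) hd
        exact le_mul_norm_of_apply_eq_zero (fun y => (hNc m y).2) hPy
    _ = c m * d m * (k n * ‖y‖) := by ring

theorem stmt_18_general (A P : ℕ → X →L[ℝ] X) (B : ℕ → ℕ → X →L[ℝ] X)
    (hP : ProjSeq P) (hSI : StronglyInvariantFor A P) (hB : SkewEvol A P B)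
    (h k : ℕ → ℝ) (hh : IsGrowthRate h) (hk : IsGrowthRate k)
    (hyp : ∃ N : ℕ → X → ℝ, NormsCompatible N P ∧
      ∃ d : ℕ → ℝ, (∀ n, 1 ≤ d n) ∧ Monotone d ∧
        ∀ m n : ℕ, n ≤ m → ∀ x : X,
          (∑ j ∈ Finset.Icc n m, h j * N j (evol A j n (P n x))) ≤
            d n * (h n * N n x) ∧
          (∑ j ∈ Finset.Icc n m, k j * N n (B j n ((1 - P j) x))) ≤
            d m * (k n * N m x)) :
    Dichotomic A P h k := by
  obtain ⟨N, ⟨-, c, hc, hc_mono, hNc⟩, d, hd, hd_mono, hsum⟩ := hyp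
  have hc0 : ∀ n, 0 ≤ c n := fun n => zero_le_one.trans (hc n)
  have hd0 : ∀ n, 0 ≤ d n := fun n => zero_le_one.trans (hd n)
  refine ⟨fun n => c n * d n, fun n => one_le_mul_of_one_le_of_one_le (hc n) (hd n),
    hc_mono.mul hd_mono hc0 hd0, fun m n hnm x => ⟨?_, ?_⟩⟩
  · exact stable_estimate hP hNc hh.nonneg (hd0 n) hnm
      (fun x => (hsum m n hnm x).1) x
  · exact unstable_estimate hP hSI.1 hB hNc hk.nonneg (hd0 m) hnm
      (fun y => (hsum m n hnm y).2) x

theorem stmt_18 [CompleteSpace X] (A P : ℕ → X →L[ℝ] X) (B : ℕ → ℕ → X →L[ℝ] X)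
    (hP : ProjSeq P) (hSI : StronglyInvariantFor A P) (hB : SkewEvol A P B)
    (h k : ℕ → ℝ) (hh : IsGrowthRate h) (hk : IsGrowthRate k)
    (hyp : ∃ N : ℕ → X → ℝ, NormsCompatible N P ∧
      ∃ d : ℕ → ℝ, (∀ n, 1 ≤ d n) ∧ Monotone d ∧
        ∀ m n : ℕ, n ≤ m → ∀ x : X,
          (∑ j ∈ Finset.Icc n m, h j * N j (evol A j n (P n x))) ≤
            d n * (h n * N n x) ∧
          (∑ j ∈ Finset.Icc n m, k j * N n (B j n ((1 - P j) x))) ≤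
            d m * (k n * N m x)) :
    Dichotomic A P h k :=
  stmt_18_general A P B hP hSI hB h k hh hk hyp

end
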